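/- The commutator [a, c⁻²] = a⁻¹·c²·a·c⁻² is a nontrivial automorphism that fixes every word of length 4, its section at every vertex v ∈ {0,1}⁴ with v ≠ 0111 is the identity, and its section at the vertex 0111 equals the commutator [a, c⁻¹] = a⁻¹·c·a·c⁻¹, which is nontrivial. In particular [a, c⁻²] is a nontrivial element of the rigid stabilizer Rist_G(0111). -/

import Mathlib

namespace BVTree

/-- States of the automaton (generators, their inverses, and the identity). -/
inductive Q : Type
  | e | qa | qb | qc | qd | qa' | qb' | qc' | qd'
  deriving DecidableEq

open Q

/-- Output function of the automaton. -/
def Qout : Q → Bool → Bool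
  | qa, x => !x
  | qa', x => !x
  | _, x => x

/-- Transition function of the automaton. -/
def Qtrans : Q → Bool → Q
  | qa, false => qd
  | qa, true => e
  | qb, false => qa
  | qb, true => qc
  | qc, _ => qa
  | qd, false => e
  | qd, true => qb
  | qa', false => e
  | qa', true => qd'
  | qb', false => qa'
  | qb', true => qc'
  | qc', _ => qa'
  | qd', false => e
  | qd', true => qb'
  | e, _ => e

/-- The state corresponding to the inverse automorphism. -/
def Qinv : Q → Q
  | e => e
  | qa => qa' | qb => qb' | qc => qc' | qd => qd'
  | qa' => qa | qb' => qb | qc' => qc | qd' => qd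

/-- The action of a state on finite binary words. -/
def act : Q → List Bool → List Bool
  | _, [] => []
  | q, x :: w => Qout q x :: act (Qtrans q x) w

lemma act_inv (q : Q) : ∀ w, act (Qinv q) (act q w) = w := by
  intro w
  induction w generalizing q with
  | nil => rfl
  | cons x w ih =>
    have h1 : Qout (Qinv q) (Qout q x) = x := by cases q <;> cases x <;> rfl
    have h2 : Qtrans (Qinv q) (Qout q x) = Qinv (Qtrans q x) := by
      cases q <;> cases x <;> rfl
    simp [act, h1, h2, ih]

/-- The tree automorphism determined by a state of the automaton. -/
def aut (q : Q) : Equiv.Perm (List Bool) where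
  toFun := act q
  invFun := act (Qinv q)
  left_inv := act_inv q
  right_inv := by
    intro w
    have h : Qinv (Qinv q) = q := by cases q <;> rfl
    simpa [h] using act_inv (Qinv q) w

/-- The automorphism `a`: `a(0w) = 1·d(w)`, `a(1w) = 0·w`. -/
def a : Equiv.Perm (List Bool) := aut qa
/-- The automorphism `b`: `b(0w) = 0·a(w)`, `b(1w) = 1·c(w)`. -/
def b : Equiv.Perm (List Bool) := aut qb
/-- The automorphism `c`: `c(0w) = 0·a(w)`, `c(1w) = 1·a(w)`. -/
def c : Equiv.Perm (List Bool) := aut qc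
/-- The automorphism `d`: `d(0w) = 0·w`, `d(1w) = 1·b(w)`. -/
def d : Equiv.Perm (List Bool) := aut qd

/-- The group `G` generated by `a`, `b`, `c`, `d`. -/
def G : Subgroup (Equiv.Perm (List Bool)) := Subgroup.closure {a, b, c, d}

/-!
Write `g = (g₀, g₁)` when `g` fixes the first letter and has sections `g₀`, `g₁`; then
`b = (a, c)`, `c = (a, a)`, `d = (1, b)`, and `a` swaps the first letter with sections `d`, `1`,
so `a² = (d, d)` and `c² = (a², a²)`. Since the recursion respects products and inverses,
`⁅a⁻¹, c²⁆ = (⁅d⁻¹, a²⁆, 1)`, `⁅d⁻¹, a²⁆ = (1, ⁅b⁻¹, d⁆)`, `⁅b⁻¹, d⁆ = (1, ⁅c⁻¹, b⁆)` and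
`⁅c⁻¹, b⁆ = (1, ⁅a⁻¹, c⁆)`: so `⁅a⁻¹, c²⁆` is supported below `0111`, where it acts as
`⁅a⁻¹, c⁆`, and `⁅a⁻¹, c⁆` moves `0000`.

Mathlib's `⁅x, y⁆ = x y x⁻¹ y⁻¹`, so the paper's `[x, y⁻¹] = x⁻¹ y x y⁻¹` is `⁅x⁻¹, y⁆`.
-/

open Equiv
open scoped commutatorElement

lemma act_e (w : List Bool) : act e w = w := by
  induction w with
  | nil => rfl
  | cons x w ih => exact congrArg (x :: ·) ih

/-- The wreath recursion `g = (g₀, g₁)`. -/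
structure Splits (g g₀ g₁ : Perm (List Bool)) : Prop where
  apply_nil : g [] = []
  apply_false (w : List Bool) : g (false :: w) = false :: g₀ w
  apply_true (w : List Bool) : g (true :: w) = true :: g₁ w

namespace Splits

variable {g g₀ g₁ h h₀ h₁ : Perm (List Bool)}

lemma one : Splits 1 1 1 := ⟨rfl, fun _ => rfl, fun _ => rfl⟩

lemma mul (hg : Splits g g₀ g₁) (hh : Splits h h₀ h₁) : Splits (g * h) (g₀ * h₀) (g₁ * h₁) where
  apply_nil := by simp [hg.apply_nil, hh.apply_nil]
  apply_false w := by simp [hg.apply_false, hh.apply_false]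
  apply_true w := by simp [hg.apply_true, hh.apply_true]

lemma inv (hg : Splits g g₀ g₁) : Splits g⁻¹ g₀⁻¹ g₁⁻¹ where
  apply_nil := by rw [Perm.inv_eq_iff_eq, hg.apply_nil]
  apply_false w := by rw [Perm.inv_eq_iff_eq, hg.apply_false]; simp
  apply_true w := by rw [Perm.inv_eq_iff_eq, hg.apply_true]; simp

lemma pow (hg : Splits g g₀ g₁) (n : ℕ) : Splits (g ^ n) (g₀ ^ n) (g₁ ^ n) := by
  induction n with
  | zero => exact one
  | succ n ih => simpa only [pow_succ] using ih.mul hg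

lemma commutator (hg : Splits g g₀ g₁) (hh : Splits h h₀ h₁) :
    Splits ⁅g, h⁆ ⁅g₀, h₀⁆ ⁅g₁, h₁⁆ := by
  simpa only [commutatorElement_def] using ((hg.mul hh).mul hg.inv).mul hh.inv

lemma conj_of_swap {σ σ₀ σ₁ : Perm (List Bool)} (hσ : σ [] = [])
    (hσ₀ : ∀ w, σ (false :: w) = true :: σ₀ w) (hσ₁ : ∀ w, σ (true :: w) = false :: σ₁ w)
    (hg : Splits g g₀ g₁) : Splits (σ⁻¹ * g * σ) (σ₀⁻¹ * g₁ * σ₀) (σ₁⁻¹ * g₀ * σ₁) where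
  apply_nil := by simp only [Perm.mul_apply, hσ, hg.apply_nil, Perm.inv_eq_iff_eq]
  apply_false w := by
    rw [Perm.mul_apply, Perm.mul_apply, hσ₀, hg.apply_true, Perm.inv_eq_iff_eq, hσ₀]; simp
  apply_true w := by
    rw [Perm.mul_apply, Perm.mul_apply, hσ₁, hg.apply_false, Perm.inv_eq_iff_eq, hσ₁]; simp

end Splits

lemma a_apply_false (w : List Bool) : a (false :: w) = true :: d w := rfl

lemma a_apply_true (w : List Bool) : a (true :: w) = false :: w :=
  congrArg (false :: ·) (act_e w)

lemma splits_b : Splits b a c := ⟨rfl, fun _ => rfl, fun _ => rfl⟩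

lemma splits_c : Splits c a a := ⟨rfl, fun _ => rfl, fun _ => rfl⟩

lemma splits_d : Splits d 1 b := ⟨rfl, fun w => congrArg (false :: ·) (act_e w), fun _ => rfl⟩

lemma splits_a_sq : Splits (a ^ 2) d d where
  apply_nil := rfl
  apply_false w := by rw [pow_two, Perm.mul_apply, a_apply_false, a_apply_true]
  apply_true w := by rw [pow_two, Perm.mul_apply, a_apply_true, a_apply_false]

lemma splits_commutator_a_inv_c_sq : Splits ⁅a⁻¹, c ^ 2⁆ ⁅d⁻¹, a ^ 2⁆ 1 := by
  simpa [commutatorElement_def] using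
    ((splits_c.pow 2).conj_of_swap (σ₁ := 1) rfl a_apply_false a_apply_true).mul
      (splits_c.pow 2).inv

lemma splits_commutator_d_inv_a_sq : Splits ⁅d⁻¹, a ^ 2⁆ 1 ⁅b⁻¹, d⁆ := by
  simpa using splits_d.inv.commutator splits_a_sq

lemma splits_commutator_b_inv_d : Splits ⁅b⁻¹, d⁆ 1 ⁅c⁻¹, b⁆ := by
  simpa using splits_b.inv.commutator splits_d

lemma splits_commutator_c_inv_b : Splits ⁅c⁻¹, b⁆ 1 ⁅a⁻¹, c⁆ := by
  simpa [commutatorElement_def] using splits_c.inv.commutator splits_b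

/-- `g ∈ Rist(v)` with section `g|_v = k`. -/
structure RistAt (v : List Bool) (g k : Perm (List Bool)) : Prop where
  apply_append (w : List Bool) : g (v ++ w) = v ++ k w
  apply_of_not_prefix (u : List Bool) : ¬ v <+: u → g u = u

namespace RistAt

variable {v : List Bool} {g g₀ g₁ k : Perm (List Bool)}

lemma root (k : Perm (List Bool)) : RistAt [] k k :=
  ⟨fun _ => rfl, fun u hu => absurd u.nil_prefix hu⟩

lemma cons_false (hg : Splits g g₀ 1) (h : RistAt v g₀ k) : RistAt (false :: v) g k where
  apply_append w := by simp only [List.cons_append, hg.apply_false, h.apply_append]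
  apply_of_not_prefix
    | [], _ => hg.apply_nil
    | false :: u, hu => by
      rw [hg.apply_false, h.apply_of_not_prefix u fun hv => hu (List.cons_prefix_cons.2 ⟨rfl, hv⟩)]
    | true :: u, _ => hg.apply_true u

lemma cons_true (hg : Splits g 1 g₁) (h : RistAt v g₁ k) : RistAt (true :: v) g k where
  apply_append w := by simp only [List.cons_append, hg.apply_true, h.apply_append]
  apply_of_not_prefix
    | [], _ => hg.apply_nil
    | false :: u, _ => hg.apply_false u
    | true :: u, hu => by
      rw [hg.apply_true, h.apply_of_not_prefix u fun hv => hu (List.cons_prefix_cons.2 ⟨rfl, hv⟩)]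

lemma ne_one (h : RistAt v g k) (hk : k ≠ 1) : g ≠ 1 := by
  rintro rfl
  exact hk <| Perm.ext fun w => List.append_cancel_left (h.apply_append w).symm

lemma apply_append_of_ne {u : List Bool} (h : RistAt v g k) (hu : u.length = v.length)
    (hne : u ≠ v) (w : List Bool) : g (u ++ w) = u ++ w :=
  h.apply_of_not_prefix _ fun hv =>
    hne (List.prefix_of_prefix_length_le hv (List.prefix_append u w) hu.ge
      |>.eq_of_length hu.symm).symm

lemma apply_eq_self_of_length_eq {u : List Bool} (h : RistAt v g k) (hk : k [] = [])
    (hu : u.length = v.length) : g u = u := by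
  by_cases huv : u = v
  · simpa [huv, hk] using h.apply_append []
  · simpa using h.apply_append_of_ne hu huv []

end RistAt

lemma ristAt_commutator_a_inv_c_sq : RistAt [false, true, true, true] ⁅a⁻¹, c ^ 2⁆ ⁅a⁻¹, c⁆ :=
  .cons_false splits_commutator_a_inv_c_sq <| .cons_true splits_commutator_d_inv_a_sq <|
    .cons_true splits_commutator_b_inv_d <| .cons_true splits_commutator_c_inv_b <| .root _

lemma commutator_a_inv_c_ne_one : ⁅a⁻¹, c⁆ ≠ 1 := fun h => by
  have : ⁅a⁻¹, c⁆ [false, false, false, false] = [false, false, false, false] := by rw [h]; rfl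
  exact absurd this (by decide)

/-- the commutator `[a, c⁻²] = a⁻¹c²ac⁻²` is nontrivial, fixes level `4`, has
trivial sections at all level-4 vertices except `0111`, where its section is the nontrivial
commutator `[a, c⁻¹] = a⁻¹cac⁻¹`; hence it is a nontrivial element of `Rist_G(0111)`. -/
theorem commutator_in_rist_0111 :
    (a⁻¹ * c ^ 2 * a * (c ^ 2)⁻¹ ≠ 1) ∧
    (∀ v : List Bool, v.length = 4 → (a⁻¹ * c ^ 2 * a * (c ^ 2)⁻¹) v = v) ∧
    (∀ v : List Bool, v.length = 4 → v ≠ [false, true, true, true] →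
      ∀ w : List Bool, (a⁻¹ * c ^ 2 * a * (c ^ 2)⁻¹) (v ++ w) = v ++ w) ∧
    (∀ w : List Bool, (a⁻¹ * c ^ 2 * a * (c ^ 2)⁻¹) ([false, true, true, true] ++ w)
        = [false, true, true, true] ++ (a⁻¹ * c * a * c⁻¹) w) ∧
    (a⁻¹ * c * a * c⁻¹ ≠ 1) ∧
    (∀ u : List Bool, ¬ ([false, true, true, true] <+: u) →
      (a⁻¹ * c ^ 2 * a * (c ^ 2)⁻¹) u = u) := by
  have hsq : a⁻¹ * c ^ 2 * a * (c ^ 2)⁻¹ = ⁅a⁻¹, c ^ 2⁆ := by rw [commutatorElement_def, inv_inv]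
  have hc : a⁻¹ * c * a * c⁻¹ = ⁅a⁻¹, c⁆ := by rw [commutatorElement_def, inv_inv]
  rw [hsq, hc]
  have hrist := ristAt_commutator_a_inv_c_sq
  exact ⟨hrist.ne_one commutator_a_inv_c_ne_one,
    fun v hv => hrist.apply_eq_self_of_length_eq rfl hv,
    fun v hv => hrist.apply_append_of_ne hv,
    hrist.apply_append, commutator_a_inv_c_ne_one, hrist.apply_of_not_prefix⟩

end BVTree
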